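/- Let n, p ≥ 1 and l ≥ 0 be integers such that p̂ = n̂ + l and p̌ ≥ 2^l · ň (i.e., p lies in the domination wedge W(n)). Then χ_p ≥ χ_n; equivalently, γ_p · 2^(n − n̂) ≤ γ_n · 2^(p − p̂). -/

import Mathlib

/-- A finite subset of the hypercube `Q_n = (ZMod 2)^n` is dominating if every point of the
hypercube is at Hamming distance at most 1 from some element of the subset. -/
def IsDominating {n : ℕ} (Δ : Finset (Fin n → ZMod 2)) : Prop :=
  ∀ y : Fin n → ZMod 2, ∃ x ∈ Δ, hammingDist x y ≤ 1

/-- The minimal domination number `γ_n` of the `n`-dimensional hypercube. -/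
noncomputable def gamma (n : ℕ) : ℕ :=
  sInf {k | ∃ Δ : Finset (Fin n → ZMod 2), IsDominating Δ ∧ Δ.card = k}

/-- The multiplicative gain `χ_n = 1 - γ_n · 2^(n̂ - n)`, where `n̂ = ⌊log₂ (n+1)⌋`. -/
noncomputable def chi (n : ℕ) : ℚ :=
  1 - (gamma n : ℚ) * (2 : ℚ) ^ ((Nat.log 2 (n + 1) : ℤ) - (n : ℤ))

/-!
Two constructions bound `γ`. Appending `k` free coordinates to a dominating set of `Q_n` gives
`γ (n + k) ≤ 2 ^ k γ n`; the words `(x, x + d, ∑ x)`, with `x` arbitrary and `d` in a dominating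
set of `Q_n`, dominate `Q_(2n+1)`, so `γ (2n+1) ≤ 2 ^ n γ n`. The first does not decrease `χ` as
long as `n̂` stays fixed, the second never decreases it. Since `n ↦ 2n + 1` raises `n̂` by one and
doubles `ň`, `l` such doublings followed by appending coordinates reach every `p` of the wedge.
-/

open Finset

section Hamming

variable {ι κ β : Type*} [Fintype ι] [Fintype κ] [DecidableEq β]

theorem hammingDist_sumElim (x₁ y₁ : ι → β) (x₂ y₂ : κ → β) :
    hammingDist (Sum.elim x₁ x₂) (Sum.elim y₁ y₂) = hammingDist x₁ y₁ + hammingDist x₂ y₂ := by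
  simp only [hammingDist, card_filter, Fintype.sum_sum_type, Sum.elim_inl, Sum.elim_inr]
  rfl

theorem hammingDist_comp_equiv (e : ι ≃ κ) (x y : κ → β) :
    hammingDist (x ∘ e) (y ∘ e) = hammingDist x y :=
  Finset.card_equiv e (by simp)

end Hamming

section Domination

variable {ι : Type*} [Fintype ι]

theorem sum_eq_hammingNorm (x : ι → ZMod 2) : ∑ i, x i = hammingNorm x := by
  have h01 : ∀ i, x i = if x i ≠ 0 then 1 else 0 := fun i => by
    generalize x i = a; revert a; decide
  rw [Finset.sum_congr rfl fun i _ => h01 i, Finset.sum_boole]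
  rfl

theorem hammingDist_eq_hammingNorm_add (x y : ι → ZMod 2) :
    hammingDist x y = hammingNorm (x + y) := by
  rw [hammingDist_eq_hammingNorm, ZModModule.neg_eq_self]

def Dominates (Δ : Finset (ι → ZMod 2)) : Prop :=
  ∀ y, ∃ x ∈ Δ, hammingDist x y ≤ 1

theorem exists_isDominating_card_eq_gamma (n : ℕ) :
    ∃ Δ : Finset (Fin n → ZMod 2), IsDominating Δ ∧ #Δ = gamma n :=
  Nat.sInf_mem (s := {k | ∃ Δ : Finset (Fin n → ZMod 2), IsDominating Δ ∧ #Δ = k})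
    ⟨_, univ, fun y => ⟨y, mem_univ y, by simp⟩, rfl⟩

theorem gamma_le_card {n : ℕ} (hι : Fintype.card ι = n) {Δ : Finset (ι → ZMod 2)}
    (hΔ : Dominates Δ) : gamma n ≤ #Δ := by
  let e : ι ≃ Fin n := Fintype.equivFinOfCardEq hι
  refine le_trans (Nat.sInf_le ⟨Δ.map (e.arrowCongr (.refl _)).toEmbedding, fun y => ?_, rfl⟩)
    (card_map _).le
  obtain ⟨x, hx, hxy⟩ := hΔ (y ∘ e)
  refine ⟨x ∘ e.symm, mem_map_of_mem _ hx, ?_⟩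
  rwa [← hammingDist_comp_equiv e, Function.comp_assoc, e.symm_comp_self, Function.comp_id]

theorem Dominates.exists_sum (κ : Type*) [Fintype κ] {Δ : Finset (ι → ZMod 2)}
    (hΔ : Dominates Δ) :
    ∃ Δ' : Finset (ι ⊕ κ → ZMod 2), Dominates Δ' ∧ #Δ' ≤ 2 ^ Fintype.card κ * #Δ := by
  classical
  refine ⟨(Δ ×ˢ univ).image fun p => Sum.elim p.1 p.2, fun y => ?_, ?_⟩
  · obtain ⟨x, hx, hxy⟩ := hΔ (y ∘ Sum.inl)
    refine ⟨Sum.elim x (y ∘ Sum.inr), mem_image.2 ⟨(x, _), mem_product.2 ⟨hx, mem_univ _⟩, rfl⟩, ?_⟩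
    rwa [← Sum.elim_comp_inl_inr y, hammingDist_sumElim, Sum.elim_comp_inr, hammingDist_self,
      add_zero]
  · calc #((Δ ×ˢ univ).image _) ≤ #(Δ ×ˢ (univ : Finset (κ → ZMod 2))) := card_image_le
      _ = 2 ^ Fintype.card κ * #Δ := by simp [mul_comm]

def doublingWord (x d : ι → ZMod 2) : (ι ⊕ ι) ⊕ Unit → ZMod 2 :=
  Sum.elim (Sum.elim x (x + d)) fun _ => ∑ i, x i

theorem Dominates.exists_doubling {Δ : Finset (ι → ZMod 2)} (hΔ : Dominates Δ) :
    ∃ Δ' : Finset ((ι ⊕ ι) ⊕ Unit → ZMod 2), Dominates Δ' ∧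
      #Δ' ≤ 2 ^ Fintype.card ι * #Δ := by
  classical
  refine ⟨(univ ×ˢ Δ).image fun p => doublingWord p.1 p.2, fun y => ?_, ?_⟩
  · set a := y ∘ Sum.inl ∘ Sum.inl
    set b := y ∘ Sum.inl ∘ Sum.inr
    set t := y (Sum.inr ())
    have hy : y = Sum.elim (Sum.elim a b) fun _ => t := by ext ((i | i) | u) <;> rfl
    obtain ⟨d, hd, hdab⟩ := hΔ (a + b)
    set δ := d + (a + b)
    have hδ : hammingNorm δ ≤ 1 := by
      rwa [hammingDist_eq_hammingNorm_add] at hdab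
    have hdist : ∀ u, hammingDist (doublingWord (a + u) d) y =
        hammingNorm u + hammingNorm (u + δ) +
          hammingDist (fun _ : Unit => ∑ i, a i + hammingNorm u) fun _ => t := by
      intro u
      have hsum : ∑ i, (a + u) i = ∑ i, a i + hammingNorm u := by
        rw [← sum_eq_hammingNorm, ← sum_add_distrib]; rfl
      have hfirst : a + u + a = u := by rw [add_right_comm, ZModModule.add_self, zero_add]
      have hsecond : a + u + d + b = u + δ := by simp only [δ]; abel
      rw [hy, doublingWord, hammingDist_sumElim, hammingDist_sumElim,
        hammingDist_eq_hammingNorm_add, hammingDist_eq_hammingNorm_add, hsum, hfirst, hsecond]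
    have hmem : ∀ u, doublingWord (a + u) d ∈ (univ ×ˢ Δ).image fun p => doublingWord p.1 p.2 :=
      fun u => mem_image.2 ⟨(a + u, d), mem_product.2 ⟨mem_univ _, hd⟩, rfl⟩
    -- Moving from `x = a` to `x = a + δ` clears the middle block at the cost of `wt δ ≤ 1`
    -- errors in the first, and flips the parity bit exactly when `δ ≠ 0`.
    by_cases hpar : ∑ i, a i = t
    · refine ⟨_, hmem 0, ?_⟩
      rw [hdist]
      simpa [hpar] using hδ
    · refine ⟨_, hmem δ, ?_⟩
      rw [hdist, ZModModule.add_self, hammingNorm_zero, add_zero]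
      interval_cases hammingNorm δ
      · simpa using hammingDist_le_card_fintype (x := fun _ : Unit => ∑ i, a i + 0)
      · have hflip : ∀ s t : ZMod 2, s ≠ t → s + 1 = t := by decide
        simp [hflip _ _ hpar]
  · calc #((univ ×ˢ Δ).image _) ≤ #((univ : Finset (ι → ZMod 2)) ×ˢ Δ) := card_image_le
      _ = 2 ^ Fintype.card ι * #Δ := by simp

end Domination

theorem gamma_add_le (n k : ℕ) : gamma (n + k) ≤ 2 ^ k * gamma n := by
  obtain ⟨Δ, hΔ, hcard⟩ := exists_isDominating_card_eq_gamma n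
  obtain ⟨Δ', hΔ', hcard'⟩ := Dominates.exists_sum (Fin k) hΔ
  calc gamma (n + k) ≤ #Δ' := gamma_le_card (by simp) hΔ'
    _ ≤ 2 ^ k * gamma n := by simpa [hcard] using hcard'

theorem gamma_two_mul_add_one_le (n : ℕ) : gamma (2 * n + 1) ≤ 2 ^ n * gamma n := by
  obtain ⟨Δ, hΔ, hcard⟩ := exists_isDominating_card_eq_gamma n
  obtain ⟨Δ', hΔ', hcard'⟩ := Dominates.exists_doubling hΔ
  calc gamma (2 * n + 1) ≤ #Δ' := gamma_le_card (by simp; ring) hΔ'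
    _ ≤ 2 ^ n * gamma n := by simpa [hcard] using hcard'

theorem log_two_two_mul_add_two (n : ℕ) : Nat.log 2 (2 * n + 1 + 1) = Nat.log 2 (n + 1) + 1 := by
  rw [show 2 * n + 1 + 1 = (n + 1) * 2 by ring, Nat.log_mul_base (by norm_num) (by omega)]

theorem log_two_add_one_le (n : ℕ) : Nat.log 2 (n + 1) ≤ n :=
  Nat.lt_succ_iff.1 (Nat.log_lt_self 2 n.succ_ne_zero)

theorem gamma_mul_pow_le_of_mem_wedge (l : ℕ) {n p : ℕ}
    (h1 : Nat.log 2 (p + 1) = Nat.log 2 (n + 1) + l)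
    (h2 : 2 ^ l * (n + 1 - 2 ^ Nat.log 2 (n + 1)) ≤ p + 1 - 2 ^ Nat.log 2 (p + 1)) :
    gamma p * 2 ^ (n - Nat.log 2 (n + 1)) ≤ gamma n * 2 ^ (p - Nat.log 2 (p + 1)) := by
  have hn := log_two_add_one_le n
  induction l generalizing n with
  | zero =>
    rw [add_zero] at h1
    rw [pow_zero, one_mul, h1] at h2
    have hnp : n ≤ p := by
      have hp := Nat.pow_log_le_self 2 p.add_one_ne_zero
      rw [h1] at hp
      omega
    calc gamma p * 2 ^ (n - Nat.log 2 (n + 1))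
        ≤ 2 ^ (p - n) * gamma n * 2 ^ (n - Nat.log 2 (n + 1)) := by
          gcongr
          simpa [Nat.add_sub_cancel' hnp] using gamma_add_le n (p - n)
      _ = gamma n * 2 ^ (p - Nat.log 2 (p + 1)) := by
          rw [h1, ← Nat.sub_add_sub_cancel hnp hn, pow_add]
          ring
  | succ l ih =>
    have hm := log_two_two_mul_add_two n
    have hmp : gamma p * 2 ^ (2 * n + 1 - Nat.log 2 (2 * n + 1 + 1)) ≤
        gamma (2 * n + 1) * 2 ^ (p - Nat.log 2 (p + 1)) := by
      refine ih (by omega) ?_ (log_two_add_one_le _)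
      rwa [hm, pow_succ, show 2 * n + 1 + 1 - 2 ^ Nat.log 2 (n + 1) * 2 =
        2 * (n + 1 - 2 ^ Nat.log 2 (n + 1)) by omega, ← mul_assoc, ← pow_succ]
    refine Nat.le_of_mul_le_mul_right (c := 2 ^ n) ?_ (by positivity)
    calc gamma p * 2 ^ (n - Nat.log 2 (n + 1)) * 2 ^ n
        = gamma p * 2 ^ (2 * n + 1 - Nat.log 2 (2 * n + 1 + 1)) := by
          rw [mul_assoc, ← pow_add, hm]
          congr 2
          omega
      _ ≤ gamma (2 * n + 1) * 2 ^ (p - Nat.log 2 (p + 1)) := hmp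
      _ ≤ 2 ^ n * gamma n * 2 ^ (p - Nat.log 2 (p + 1)) := by
          gcongr
          exact gamma_two_mul_add_one_le n
      _ = gamma n * 2 ^ (p - Nat.log 2 (p + 1)) * 2 ^ n := by ring

theorem chi_eq_one_sub_div (n : ℕ) : chi n = 1 - gamma n / 2 ^ (n - Nat.log 2 (n + 1)) := by
  have hexp : (Nat.log 2 (n + 1) : ℤ) - n = -((n - Nat.log 2 (n + 1) : ℕ) : ℤ) := by
    have := log_two_add_one_le n
    omega
  rw [chi, hexp, zpow_neg, zpow_natCast, div_eq_mul_inv]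

theorem stmt_10_general (n p l : ℕ)
    (h1 : Nat.log 2 (p + 1) = Nat.log 2 (n + 1) + l)
    (h2 : 2 ^ l * (n + 1 - 2 ^ Nat.log 2 (n + 1)) ≤ p + 1 - 2 ^ Nat.log 2 (p + 1)) :
    chi n ≤ chi p ∧
    gamma p * 2 ^ (n - Nat.log 2 (n + 1)) ≤ gamma n * 2 ^ (p - Nat.log 2 (p + 1)) := by
  have hγ := gamma_mul_pow_le_of_mem_wedge l h1 h2
  refine ⟨?_, hγ⟩
  rw [chi_eq_one_sub_div, chi_eq_one_sub_div, sub_le_sub_iff_left,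
    div_le_div_iff₀ (by positivity) (by positivity)]
  exact_mod_cast hγ

/-- If `p ∈ W(n)`, i.e. `p̂ = n̂ + l` and `p̌ ≥ 2^l · ň` for some `l ≥ 0`
(where `n̂ = ⌊log₂(n+1)⌋` and `ň = n + 1 - 2^n̂`), then `χ_p ≥ χ_n`;
equivalently `γ_p · 2^(n - n̂) ≤ γ_n · 2^(p - p̂)`. -/
theorem stmt_10 (n p l : ℕ) (hn : 1 ≤ n) (hp : 1 ≤ p)
    (h1 : Nat.log 2 (p + 1) = Nat.log 2 (n + 1) + l)
    (h2 : 2 ^ l * (n + 1 - 2 ^ Nat.log 2 (n + 1)) ≤ p + 1 - 2 ^ Nat.log 2 (p + 1)) :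
    chi n ≤ chi p ∧
    gamma p * 2 ^ (n - Nat.log 2 (n + 1)) ≤ gamma n * 2 ^ (p - Nat.log 2 (p + 1)) :=
  stmt_10_general n p l h1 h2
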